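/- Let T be a rooted tree with root r and branches T_1,…,T_k (the components of T − r, each rooted at the child of r it contains). Then, with respect to a suitable ordering of the leaves, the ancestral matrix C(T) is block diagonal with blocks C(T_1)+E_1, …, C(T_k)+E_k, where E_j is the all-ones square matrix whose size equals the number of leaves of T_j. -/
import Mathlib


open Matrix

/-- A rooted tree on a finite vertex type `V`, encoded by its root and the
parent function: the root is its own parent, and iterating the parent function
from any vertex eventually reaches the root.  (These conditions force the graph
whose edges join each non-root vertex to its parent to be a tree.) -/
structure TreeOn (V : Type) [Fintype V] [DecidableEq V] where
  root : V
  parent : V → V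
  parent_root : parent root = root
  reaches : ∀ v, ∃ k, parent^[k] v = root

namespace TreeOn

variable {V : Type} [Fintype V] [DecidableEq V]

/-- `u` is a (weak) ancestor of `v`: some iterate of the parent function sends
`v` to `u`.  (Any ancestor is reached within `Fintype.card V` steps, so the
bound makes the predicate decidable without changing its meaning.) -/
def IsAncestor (T : TreeOn V) (u v : V) : Prop :=
  ∃ k, k ≤ Fintype.card V ∧ T.parent^[k] v = u

instance (T : TreeOn V) (u v : V) : Decidable (T.IsAncestor u v) := by
  have h : T.IsAncestor u v ↔ ∃ k ∈ Finset.range (Fintype.card V + 1), T.parent^[k] v = u := by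
    simp [IsAncestor, Nat.lt_succ_iff]
  rw [h]; infer_instance

/-- The level of a vertex: its distance to the root. -/
def level (T : TreeOn V) (v : V) : ℕ := Nat.find (T.reaches v)

/-- The ancestral level `ℓ(v ∨ w)`: the level of the lowest common ancestor
of `v` and `w`, i.e. the greatest level of a common ancestor. -/
def lcaLevel (T : TreeOn V) (v w : V) : ℕ :=
  (Finset.univ.filter fun u => T.IsAncestor u v ∧ T.IsAncestor u w).sup T.level

/-- A leaf is a vertex with no children. -/
def IsLeaf (T : TreeOn V) (v : V) : Prop := ∀ u, T.parent u = v → u = v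

instance (T : TreeOn V) : DecidablePred T.IsLeaf := fun v =>
  inferInstanceAs (Decidable (∀ u, T.parent u = v → u = v))

/-- The type of leaves of `T`. -/
abbrev Leaf (T : TreeOn V) := {v : V // T.IsLeaf v}

/-- The ancestral matrix `C(T)`, indexed by the leaves of `T`, whose
`(v, w)` entry is the ancestral level `ℓ(v ∨ w)`. -/
noncomputable def ancMatrix (T : TreeOn V) : Matrix T.Leaf T.Leaf ℝ :=
  Matrix.of fun v w => (T.lcaLevel v.1 w.1 : ℝ)

/-- The ancestral spectral radius `ρ_C(T)`: the largest eigenvalue of `C(T)`. -/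
noncomputable def rhoC (T : TreeOn V) : ℝ :=
  sSup {μ : ℝ | ∃ x : T.Leaf → ℝ, x ≠ 0 ∧ T.ancMatrix.mulVec x = μ • x}

/-- The underlying simple graph of the tree: each non-root vertex is joined
to its parent. -/
def graph (T : TreeOn V) : SimpleGraph V :=
  SimpleGraph.fromRel fun u v => T.parent u = v ∧ u ≠ v

/-- The number of children (outdegree) of a vertex. -/
def childCount (T : TreeOn V) (v : V) : ℕ :=
  (Finset.univ.filter fun u => T.parent u = v ∧ u ≠ v).card

end TreeOn

namespace TreeOn

variable {V : Type} [Fintype V] [DecidableEq V]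

/-- The children of the root: the roots of the branches of `T`. -/
abbrev RootChild (T : TreeOn V) := {c : V // T.parent c = T.root ∧ c ≠ T.root}

/-- The vertices of the branch rooted at the root child `c`: the descendants
of `c`. -/
abbrev BranchVertex (T : TreeOn V) (c : T.RootChild) := {v : V // T.IsAncestor c.1 v}

/-- The parent function of the branch rooted at `c`: as in `T`, except that
`c` becomes the root of the branch. -/
def branchParent (T : TreeOn V) (c : T.RootChild) (v : T.BranchVertex c) :
    T.BranchVertex c :=
  if h : v.1 = c.1 then v
  else
    ⟨T.parent v.1, by
      obtain ⟨k, hk, hik⟩ := v.2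
      match k, hik with
      | 0, hik => exact absurd hik h
      | k + 1, hik =>
        exact ⟨k, le_trans (Nat.le_succ k) hk, by
          rw [← Function.iterate_succ_apply]; exact hik⟩⟩

/-- The branch of `T` rooted at the root child `c`: the rooted tree induced by
`c` and all its descendants, with root `c`. -/
def branch (T : TreeOn V) (c : T.RootChild) : TreeOn (T.BranchVertex c) where
  root := ⟨c.1, 0, Nat.zero_le _, rfl⟩
  parent := T.branchParent c
  parent_root := by simp [branchParent]
  reaches := by
    have key : ∀ (k : ℕ) (v : T.BranchVertex c), T.parent^[k] v.1 = c.1 →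
        ∃ m, (T.branchParent c)^[m] v = ⟨c.1, 0, Nat.zero_le _, rfl⟩ := by
      intro k
      induction k with
      | zero =>
        intro v hv
        exact ⟨0, Subtype.ext hv⟩
      | succ k ih =>
        intro v hv
        by_cases h : v.1 = c.1
        · exact ⟨0, Subtype.ext h⟩
        · have hp : T.branchParent c v = ⟨T.parent v.1, _⟩ := dif_neg h
          have h2 : T.parent^[k] (T.branchParent c v).1 = c.1 := by
            rw [hp]
            rw [← Function.iterate_succ_apply]
            exact hv
          obtain ⟨m, hm⟩ := ih _ h2
          exact ⟨m + 1, by rw [Function.iterate_succ_apply]; exact hm⟩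
    intro v
    obtain ⟨k, hk, hik⟩ := v.2
    exact key k v hik

end TreeOn

namespace TreeOn

variable {V : Type} [Fintype V] [DecidableEq V] (T : TreeOn V)

lemma iterate_root (k : ℕ) : T.parent^[k] T.root = T.root :=
  Function.iterate_fixed T.parent_root k

lemma level_spec (v : V) : T.parent^[T.level v] v = T.root := Nat.find_spec (T.reaches v)

lemma level_min {v : V} {m : ℕ} (h : m < T.level v) : T.parent^[m] v ≠ T.root :=
  Nat.find_min (T.reaches v) h

lemma iterate_eq_root {v : V} {m : ℕ} (h : T.level v ≤ m) : T.parent^[m] v = T.root := by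
  rw [← Nat.sub_add_cancel h, Function.iterate_add_apply, T.level_spec, T.iterate_root]

lemma chain_inj {v : V} {i j : ℕ} (hi : i ≤ T.level v) (hj : j ≤ T.level v)
    (h : T.parent^[i] v = T.parent^[j] v) : i = j := by
  rcases le_total i j with hij | hij
  · by_contra hne
    have h1 : T.parent^[(T.level v - j) + i] v = T.root := by
      rw [Function.iterate_add_apply, h, ← Function.iterate_add_apply,
        Nat.sub_add_cancel hj, T.level_spec]
    exact T.level_min (by omega) h1
  · by_contra hne
    have h1 : T.parent^[(T.level v - i) + j] v = T.root := by
      rw [Function.iterate_add_apply, ← h, ← Function.iterate_add_apply,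
        Nat.sub_add_cancel hi, T.level_spec]
    exact T.level_min (by omega) h1

lemma level_lt_card (v : V) : T.level v < Fintype.card V := by
  have hinj : Function.Injective (fun i : Fin (T.level v + 1) => T.parent^[i.1] v) := by
    intro i j hij
    exact Fin.ext (T.chain_inj (Nat.lt_succ_iff.1 i.2) (Nat.lt_succ_iff.1 j.2) hij)
  have := Fintype.card_le_of_injective _ hinj
  simpa using this

lemma isAncestor_iff {u v : V} : T.IsAncestor u v ↔ ∃ k, T.parent^[k] v = u := by
  constructor
  · rintro ⟨k, _, hk⟩; exact ⟨k, hk⟩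
  · rintro ⟨k, hk⟩
    by_cases h : k ≤ T.level v
    · exact ⟨k, le_trans h (T.level_lt_card v).le, hk⟩
    · refine ⟨T.level v, (T.level_lt_card v).le, ?_⟩
      rw [T.level_spec, ← hk, T.iterate_eq_root (by omega)]

lemma root_isAncestor (v : V) : T.IsAncestor T.root v :=
  T.isAncestor_iff.2 ⟨T.level v, T.level_spec v⟩

lemma level_eq_zero_iff {v : V} : T.level v = 0 ↔ v = T.root := by
  constructor
  · intro h
    have := T.level_spec v
    rwa [h] at this
  · rintro rfl
    exact (Nat.find_eq_zero _).2 rfl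

lemma level_iterate {v : V} {k : ℕ} (h : k ≤ T.level v) :
    T.level (T.parent^[k] v) = T.level v - k := by
  apply le_antisymm
  · apply Nat.find_min'
    rw [← Function.iterate_add_apply, Nat.sub_add_cancel h, T.level_spec]
  · by_contra hlt
    push_neg at hlt
    have h1 : T.parent^[T.level (T.parent^[k] v) + k] v = T.root := by
      rw [Function.iterate_add_apply, T.level_spec]
    exact T.level_min (by omega) h1

lemma rootChild_eq_iterate {c : T.RootChild} {v : V} (h : T.IsAncestor c.1 v) :
    c.1 = T.parent^[T.level v - 1] v := by
  obtain ⟨a, ha⟩ := T.isAncestor_iff.1 h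
  have hne : c.1 ≠ T.root := c.2.2
  have haL : a < T.level v := by
    by_contra hge
    exact hne (by rw [← ha, T.iterate_eq_root (by omega)])
  have hlc : T.level c.1 = 1 := by
    have h1 : T.level c.1 ≤ 1 := Nat.find_min' _ (by simpa using c.2.1)
    have h0 : T.level c.1 ≠ 0 := fun h0 => hne (T.level_eq_zero_iff.1 h0)
    omega
  have := T.level_iterate (v := v) (k := a) haL.le
  rw [ha, hlc] at this
  have : a = T.level v - 1 := by omega
  rw [← this, ha]

lemma branchVertex_ne_root {c : T.RootChild} {v : V} (h : T.IsAncestor c.1 v) :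
    v ≠ T.root := by
  rintro rfl
  obtain ⟨a, ha⟩ := T.isAncestor_iff.1 h
  exact c.2.2 (by rw [← ha, T.iterate_root])

lemma branchVertex_level_pos {c : T.RootChild} {v : V} (h : T.IsAncestor c.1 v) :
    1 ≤ T.level v := by
  have := T.branchVertex_ne_root h
  have : T.level v ≠ 0 := fun h0 => this (T.level_eq_zero_iff.1 h0)
  omega

lemma ancestor_of_branchVertex {c : T.RootChild} {u v : V} (hv : T.IsAncestor c.1 v)
    (hu : T.IsAncestor u v) (hur : u ≠ T.root) : T.IsAncestor c.1 u := by
  obtain ⟨k, hk⟩ := T.isAncestor_iff.1 hu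
  have hkL : k < T.level v := by
    by_contra hge
    exact hur (by rw [← hk, T.iterate_eq_root (by omega)])
  refine T.isAncestor_iff.2 ⟨T.level v - 1 - k, ?_⟩
  rw [← hk, ← Function.iterate_add_apply]
  have : T.level v - 1 - k + k = T.level v - 1 := by omega
  rw [this, ← T.rootChild_eq_iterate hv]

lemma rootChild_unique {c c' : T.RootChild} {v : V} (h : T.IsAncestor c.1 v)
    (h' : T.IsAncestor c'.1 v) : c = c' :=
  Subtype.ext (by rw [T.rootChild_eq_iterate h, T.rootChild_eq_iterate h'])

section Branch

variable (c : T.RootChild)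

lemma branchParent_iterate (v : T.BranchVertex c) {k : ℕ} (hk : k ≤ T.level v.1 - 1) :
    ((T.branchParent c)^[k] v).1 = T.parent^[k] v.1 := by
  induction k with
  | zero => rfl
  | succ k ih =>
    have hk' : k ≤ T.level v.1 - 1 := by omega
    have hw := ih hk'
    have hne : ((T.branchParent c)^[k] v).1 ≠ c.1 := by
      intro heq
      rw [hw] at heq
      have hc := T.rootChild_eq_iterate v.2
      have hL1 : T.level v.1 - 1 ≤ T.level v.1 := by omega
      have := T.chain_inj (v := v.1) (i := k) (j := T.level v.1 - 1)
        (by omega) hL1 (by rw [heq, ← hc])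
      omega
    rw [Function.iterate_succ_apply', branchParent, dif_neg hne]
    show T.parent ((T.branchParent c)^[k] v).1 = T.parent^[k + 1] v.1
    rw [hw]
    exact (Function.iterate_succ_apply' T.parent k v.1).symm

lemma branch_root_val : (T.branch c).root.1 = c.1 := rfl

lemma branch_parent_def : (T.branch c).parent = T.branchParent c := rfl

lemma branch_level (v : T.BranchVertex c) :
    (T.branch c).level v = T.level v.1 - 1 := by
  have hiter : (T.branchParent c)^[T.level v.1 - 1] v = (T.branch c).root := by
    apply Subtype.ext
    rw [T.branchParent_iterate c v le_rfl, branch_root_val, ← T.rootChild_eq_iterate v.2]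
  apply le_antisymm
  · exact Nat.find_min' _ hiter
  · by_contra hlt
    push_neg at hlt
    have hspec := (T.branch c).level_spec v
    have h1 : T.parent^[(T.branch c).level v] v.1 = c.1 := by
      rw [← T.branchParent_iterate c v hlt.le]
      rw [branch_parent_def] at hspec
      rw [hspec, branch_root_val]
    have hc := T.rootChild_eq_iterate v.2
    have := T.chain_inj (v := v.1) (i := (T.branch c).level v) (j := T.level v.1 - 1)
      (by omega) (by omega) (by rw [h1, ← hc])
    omega

lemma branch_level' (v : T.BranchVertex c) :
    T.level v.1 = (T.branch c).level v + 1 := by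
  have h1 := T.branchVertex_level_pos v.2
  rw [T.branch_level]
  omega

lemma branch_isAncestor_iff (u v : T.BranchVertex c) :
    (T.branch c).IsAncestor u v ↔ T.IsAncestor u.1 v.1 := by
  rw [(T.branch c).isAncestor_iff, T.isAncestor_iff]
  constructor
  · rintro ⟨k, hk⟩
    by_cases h : k ≤ T.level v.1 - 1
    · refine ⟨k, ?_⟩
      rw [← T.branchParent_iterate c v h, ← branch_parent_def, hk]
    · have hfix : (T.branch c).parent^[k] v = (T.branch c).root := by
        have h1 : (T.branch c).parent^[T.level v.1 - 1] v = (T.branch c).root := by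
          apply Subtype.ext
          rw [branch_parent_def, T.branchParent_iterate c v le_rfl, branch_root_val,
            ← T.rootChild_eq_iterate v.2]
        have : k = (k - (T.level v.1 - 1)) + (T.level v.1 - 1) := by omega
        rw [this, Function.iterate_add_apply, h1,
          Function.iterate_fixed (T.branch c).parent_root]
      rw [hfix] at hk
      obtain ⟨a, ha⟩ := T.isAncestor_iff.1 v.2
      exact ⟨a, ha.trans (congrArg Subtype.val hk)⟩
  · rintro ⟨k, hk⟩
    have hkL : k ≤ T.level v.1 - 1 := by
      by_contra hgt
      have hL := T.branchVertex_level_pos v.2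
      have : T.parent^[k] v.1 = T.root := T.iterate_eq_root (by omega)
      exact T.branchVertex_ne_root u.2 (by rw [← hk, this])
    refine ⟨k, Subtype.ext ?_⟩
    rw [branch_parent_def, T.branchParent_iterate c v hkL, hk]

lemma lcaLevel_branch (v w : T.BranchVertex c) :
    T.lcaLevel v.1 w.1 = (T.branch c).lcaLevel v w + 1 := by
  apply le_antisymm
  · apply Finset.sup_le
    intro u hu
    rw [Finset.mem_filter] at hu
    obtain ⟨-, h1, h2⟩ := hu
    by_cases hur : u = T.root
    · subst hur
      rw [T.level_eq_zero_iff.2 rfl]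
      omega
    · have hcu : T.IsAncestor c.1 u := T.ancestor_of_branchVertex v.2 h1 hur
      set u' : T.BranchVertex c := ⟨u, hcu⟩ with hu'
      have hmem : u' ∈ Finset.univ.filter fun x =>
          (T.branch c).IsAncestor x v ∧ (T.branch c).IsAncestor x w := by
        rw [Finset.mem_filter]
        exact ⟨Finset.mem_univ _, (T.branch_isAncestor_iff c u' v).2 h1,
          (T.branch_isAncestor_iff c u' w).2 h2⟩
      have hle : (T.branch c).level u' ≤ (T.branch c).lcaLevel v w :=
        Finset.le_sup hmem
      have hbl : T.level u = (T.branch c).level u' + 1 := T.branch_level' c u'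
      omega
  · have hne : ((Finset.univ.filter fun x =>
        (T.branch c).IsAncestor x v ∧ (T.branch c).IsAncestor x w)).Nonempty := by
      refine ⟨(T.branch c).root, ?_⟩
      rw [Finset.mem_filter]
      exact ⟨Finset.mem_univ _, (T.branch c).root_isAncestor v, (T.branch c).root_isAncestor w⟩
    obtain ⟨u', hmem, hsup⟩ := Finset.exists_mem_eq_sup _ hne (T.branch c).level
    rw [Finset.mem_filter] at hmem
    obtain ⟨-, h1, h2⟩ := hmem
    have hmem' : u'.1 ∈ Finset.univ.filter fun x =>
        T.IsAncestor x v.1 ∧ T.IsAncestor x w.1 := by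
      rw [Finset.mem_filter]
      exact ⟨Finset.mem_univ _, (T.branch_isAncestor_iff c u' v).1 h1,
        (T.branch_isAncestor_iff c u' w).1 h2⟩
    have hle : T.level u'.1 ≤ T.lcaLevel v.1 w.1 := Finset.le_sup hmem'
    have hbl := T.branch_level' c u'
    have hsup' : (T.branch c).lcaLevel v w = (T.branch c).level u' := hsup
    omega

lemma branch_isLeaf_iff (v : T.BranchVertex c) :
    (T.branch c).IsLeaf v ↔ T.IsLeaf v.1 := by
  constructor
  · intro h u hu
    have hcu : T.IsAncestor c.1 u := by
      obtain ⟨a, ha⟩ := T.isAncestor_iff.1 v.2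
      exact T.isAncestor_iff.2 ⟨a + 1, by rw [Function.iterate_succ_apply, hu, ha]⟩
    set u' : T.BranchVertex c := ⟨u, hcu⟩ with hu'
    have hne : u ≠ c.1 := by
      intro heq
      apply T.branchVertex_ne_root v.2
      rw [← hu, heq, c.2.1]
    have hp : (T.branch c).parent u' = v := by
      apply Subtype.ext
      rw [branch_parent_def, branchParent, dif_neg hne]
      exact hu
    have := h u' hp
    exact congrArg Subtype.val this
  · intro h u hu
    by_cases hc : u.1 = c.1
    · have : (T.branch c).parent u = u := by
        apply Subtype.ext
        rw [branch_parent_def, branchParent, dif_pos hc]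
      rw [← hu, this]
    · have hp : T.parent u.1 = v.1 := by
        have : ((T.branch c).parent u).1 = T.parent u.1 := by
          rw [branch_parent_def, branchParent, dif_neg hc]
        rw [← this, hu]
      exact Subtype.ext (h u.1 hp)

end Branch

lemma lcaLevel_diff {c c' : T.RootChild} (h : c ≠ c') {v w : V}
    (hv : T.IsAncestor c.1 v) (hw : T.IsAncestor c'.1 w) : T.lcaLevel v w = 0 := by
  rw [← Nat.le_zero]
  apply Finset.sup_le
  intro u hu
  rw [Finset.mem_filter] at hu
  obtain ⟨-, h1, h2⟩ := hu
  by_cases hur : u = T.root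
  · subst hur
    rw [T.level_eq_zero_iff.2 rfl]
  · exact absurd (T.rootChild_unique (T.ancestor_of_branchVertex hv h1 hur)
      (T.ancestor_of_branchVertex hw h2 hur)) h

/-- The root child whose branch contains a given non-root vertex. -/
def rootChildOf (v : V) (hv : v ≠ T.root) : T.RootChild :=
  ⟨T.parent^[T.level v - 1] v, by
    have hL : 1 ≤ T.level v := by
      have : T.level v ≠ 0 := fun h0 => hv (T.level_eq_zero_iff.1 h0)
      omega
    constructor
    · have h1 : T.parent^[T.level v - 1 + 1] v = T.root := by
        have : T.level v - 1 + 1 = T.level v := by omega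
        rw [this, T.level_spec]
      rw [Function.iterate_succ_apply'] at h1
      exact h1
    · intro heq
      have := T.level_iterate (v := v) (k := T.level v - 1) (by omega)
      rw [heq, T.level_eq_zero_iff.2 rfl] at this
      omega⟩

lemma rootChildOf_isAncestor (v : V) (hv : v ≠ T.root) :
    T.IsAncestor (T.rootChildOf v hv).1 v :=
  T.isAncestor_iff.2 ⟨T.level v - 1, rfl⟩

lemma leaf_ne_root (hT : ∃ v, v ≠ T.root) {v : V} (hv : T.IsLeaf v) : v ≠ T.root := by
  rintro rfl
  obtain ⟨w, hw⟩ := hT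
  set c := T.rootChildOf w hw
  exact c.2.2 (hv c.1 c.2.1)

lemma branchLeaf_heq {c c' : T.RootChild} (h : c = c') (x : (T.branch c).Leaf)
    (y : (T.branch c').Leaf) (hxy : x.1.1 = y.1.1) : HEq x y := by
  subst h
  exact heq_of_eq (Subtype.ext (Subtype.ext hxy))

/-- The bijection between the leaves of `T` and the disjoint union of the leaf
sets of the branches of `T`. -/
def leafEquiv (hT : ∃ v, v ≠ T.root) :
    T.Leaf ≃ Σ c : T.RootChild, (T.branch c).Leaf where
  toFun v :=
    ⟨T.rootChildOf v.1 (T.leaf_ne_root hT v.2),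
     ⟨⟨v.1, T.rootChildOf_isAncestor v.1 (T.leaf_ne_root hT v.2)⟩,
      (T.branch_isLeaf_iff _ _).2 v.2⟩⟩
  invFun p := ⟨p.2.1.1, (T.branch_isLeaf_iff p.1 p.2.1).1 p.2.2⟩
  left_inv v := rfl
  right_inv p := by
    rcases p with ⟨c, l⟩
    have hc : T.rootChildOf l.1.1
        (T.leaf_ne_root hT ((T.branch_isLeaf_iff c l.1).1 l.2)) = c :=
      Subtype.ext (T.rootChild_eq_iterate l.1.2).symm
    exact Sigma.ext hc (T.branchLeaf_heq hc _ _ rfl)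

end TreeOn

/-- Let `T` be a rooted tree (with at least one non-root
vertex) and let its branches be the subtrees rooted at the children of the
root.  Then, with respect to a suitable ordering of the leaves (i.e. up to a
bijection between the leaves of `T` and the disjoint union of the leaf sets of
the branches), the ancestral matrix `C(T)` is block diagonal with blocks
`C(T_j) + E_j`, where `E_j` is the all-ones matrix of the size of the number
of leaves of the branch `T_j`. -/
theorem ancMatrix_blockDiagonal_branches
    {V : Type} [Fintype V] [DecidableEq V] (T : TreeOn V)
    (hT : ∃ v, v ≠ T.root) :
    ∃ e : T.Leaf ≃ (Σ c : T.RootChild, (T.branch c).Leaf),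
      ∀ v w : T.Leaf,
        T.ancMatrix v w =
          Matrix.blockDiagonal'
            (fun c : T.RootChild =>
              (T.branch c).ancMatrix + Matrix.of fun _ _ => (1 : ℝ))
            (e v) (e w) := by
  refine ⟨T.leafEquiv hT, fun v w => ?_⟩
  rcases hv : T.leafEquiv hT v with ⟨c, x⟩
  rcases hw : T.leafEquiv hT w with ⟨c', y⟩
  have hv1 : v.1 = x.1.1 := by
    have h2 : v = (T.leafEquiv hT).symm ⟨c, x⟩ := by
      rw [← hv]; exact ((T.leafEquiv hT).symm_apply_apply v).symm
    rw [h2]; rfl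
  have hw1 : w.1 = y.1.1 := by
    have h2 : w = (T.leafEquiv hT).symm ⟨c', y⟩ := by
      rw [← hw]; exact ((T.leafEquiv hT).symm_apply_apply w).symm
    rw [h2]; rfl
  have hvx : T.IsAncestor c.1 v.1 := by rw [hv1]; exact x.1.2
  have hwy : T.IsAncestor c'.1 w.1 := by rw [hw1]; exact y.1.2
  by_cases h : c = c'
  · subst h
    rw [Matrix.blockDiagonal'_apply_eq]
    show ((T.lcaLevel v.1 w.1 : ℕ) : ℝ) = _
    rw [hv1, hw1, T.lcaLevel_branch c x.1 y.1]
    show _ = ((T.branch c).lcaLevel x.1 y.1 : ℝ) + 1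
    push_cast
    ring
  · rw [Matrix.blockDiagonal'_apply_ne _ _ _ h]
    show ((T.lcaLevel v.1 w.1 : ℕ) : ℝ) = 0
    rw [T.lcaLevel_diff h hvx hwy]
    simp
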